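/- Let I : (0,1) → (0,1) be nondecreasing. Then I has the average property if and only if there exists C > 0 such that sup_{0<s≤t} I(s) f^{**}(s) ≤ C·sup_{0<s≤t} I(s) f^*(s) for every f ∈ M_+(0,1) and every t ∈ (0,1) (the reverse inequality sup_{0<s≤t} I(s) f^*(s) ≤ sup_{0<s≤t} I(s) f^{**}(s) always holds since f^* ≤ f^{**}). In particular, under the average property the functionals ‖f‖_{m_I} = sup_{0<t<1} I(t) f^*(t) and ‖f‖_{M_I} = sup_{0<t<1} I(t) f^{**}(t) are equivalent on M_+(0,1). -/
import Mathlib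


open MeasureTheory Set Filter
open scoped ENNReal

noncomputable section

/-- The nonincreasing rearrangement of `f` over `(0,1)`. -/
def rearr (f : ℝ → ℝ≥0∞) (t : ℝ) : ℝ≥0∞ :=
  sInf {l : ℝ≥0∞ | volume {s ∈ Set.Ioo (0:ℝ) 1 | l < f s} ≤ ENNReal.ofReal t}

/-- The maximal nonincreasing rearrangement `f^{**}(t) = (1/t) ∫_0^t f^*(s) ds`. -/
def dstar (f : ℝ → ℝ≥0∞) (t : ℝ) : ℝ≥0∞ :=
  (ENNReal.ofReal t)⁻¹ * ∫⁻ s in Set.Ioo (0:ℝ) t, rearr f s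

/-- The `L¹(0,1)` norm. -/
def lOne (f : ℝ → ℝ≥0∞) : ℝ≥0∞ := ∫⁻ t in Set.Ioo (0:ℝ) 1, f t

/-- The norm of the Marcinkiewicz-type space `m_I`. -/
def mNorm (I : ℝ → ℝ) (f : ℝ → ℝ≥0∞) : ℝ≥0∞ :=
  ⨆ t ∈ Set.Ioo (0:ℝ) 1, ENNReal.ofReal (I t) * rearr f t

/-- The norm of `m_Ĩ` where `Ĩ(t) = t / I(t)`. -/
def mNormTilde (I : ℝ → ℝ) (f : ℝ → ℝ≥0∞) : ℝ≥0∞ :=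
  ⨆ t ∈ Set.Ioo (0:ℝ) 1, ENNReal.ofReal (t / I t) * rearr f t

/-- The supremum operator `S_I f(t) = (1/I(t)) sup_{0<s≤t} I(s) f^*(s)`. -/
def SI (I : ℝ → ℝ) (f : ℝ → ℝ≥0∞) : ℝ → ℝ≥0∞ := fun t =>
  (ENNReal.ofReal (I t))⁻¹ * ⨆ s ∈ Set.Ioc (0:ℝ) t, ENNReal.ofReal (I s) * rearr f s

/-- The supremum operator `T_I f(t) = (I(t)/t) sup_{t≤s<1} (s/I(s)) f^*(s)`. -/
def TI (I : ℝ → ℝ) (f : ℝ → ℝ≥0∞) : ℝ → ℝ≥0∞ := fun t =>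
  ENNReal.ofReal (I t / t) * ⨆ s ∈ Set.Ico t 1, ENNReal.ofReal (s / I s) * rearr f s

/-- `H_I f(t) = ∫_t^1 f(s)/I(s) ds`. -/
def HI (I : ℝ → ℝ) (f : ℝ → ℝ≥0∞) : ℝ → ℝ≥0∞ := fun t =>
  ∫⁻ s in Set.Ioo t 1, f s / ENNReal.ofReal (I s)

/-- `R_I f(t) = (1/I(t)) ∫_0^t f(s) ds`. -/
def RI (I : ℝ → ℝ) (f : ℝ → ℝ≥0∞) : ℝ → ℝ≥0∞ := fun t =>
  (ENNReal.ofReal (I t))⁻¹ * ∫⁻ s in Set.Ioo (0:ℝ) t, f s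

/-- `I : (0,1) → (0,1)` is quasiconcave: a nondecreasing bijection of `(0,1)` onto `(0,1)`
with `I(t)/t` nonincreasing, `I(0+) = 0` and `I(1-) = 1`. -/
def Quasiconcave (I : ℝ → ℝ) : Prop :=
  Set.BijOn I (Set.Ioo 0 1) (Set.Ioo 0 1) ∧
  MonotoneOn I (Set.Ioo 0 1) ∧
  AntitoneOn (fun t => I t / t) (Set.Ioo 0 1) ∧
  Tendsto I (nhdsWithin 0 (Set.Ioo 0 1)) (nhds 0) ∧
  Tendsto I (nhdsWithin 1 (Set.Ioo 0 1)) (nhds 1)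

/-- Condition (★): `∫_0^t I(s)/s ds ≲ I(t)`. -/
def StarCond (I : ℝ → ℝ) : Prop :=
  ∃ C : ℝ, 0 < C ∧ ∀ t ∈ Set.Ioo (0:ℝ) 1,
    ∫⁻ s in Set.Ioo (0:ℝ) t, ENNReal.ofReal (I s / s) ≤ ENNReal.ofReal (C * I t)

/-- The average property: `∫_0^t ds/I(s) ≲ t/I(t)`. -/
def AvgProp (I : ℝ → ℝ) : Prop :=
  ∃ C : ℝ, 0 < C ∧ ∀ t ∈ Set.Ioo (0:ℝ) 1,
    ∫⁻ s in Set.Ioo (0:ℝ) t, ENNReal.ofReal (1 / I s) ≤ ENNReal.ofReal (C * (t / I t))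

/-- The condition `∫_t^1 I(s)/s² ds ≲ (1/t) ∫_0^t I(s)/s ds`. -/
def MaxCond (I : ℝ → ℝ) : Prop :=
  ∃ C : ℝ, 0 < C ∧ ∀ t ∈ Set.Ioo (0:ℝ) 1,
    ∫⁻ s in Set.Ioo t 1, ENNReal.ofReal (I s / s ^ 2) ≤
      ENNReal.ofReal (C / t) * ∫⁻ s in Set.Ioo (0:ℝ) t, ENNReal.ofReal (I s / s)

/-- The class `𝒬` of quasiconcave functions. -/
def ClassQ (I : ℝ → ℝ) : Prop :=
  Quasiconcave I ∧ StarCond I ∧ AvgProp I ∧ MaxCond I ∧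
  ∃ c d : ℝ,
    IsLUB {l : ℝ | 0 ≤ l ∧ ∀ t ∈ Set.Ioo (0:ℝ) 1,
      ENNReal.ofReal (l * (I t / t ^ 2 - 1)) ≤
        ∫⁻ s in Set.Ioo t 1, ENNReal.ofReal (I s / s ^ 3)} c ∧
    IsLeast {e : ℝ | 0 < e ∧ ∀ t ∈ Set.Ioo (0:ℝ) 1,
      ∫⁻ s in Set.Ioo t 1, ENNReal.ofReal (I s / s ^ 2) ≤
        ENNReal.ofReal (e * (I t / t))} d ∧
    (1 - c) * d ≤ c

/-- The `Δ₂` condition: `I(2t) ≤ C I(t)` for `t ∈ (0,1/2)`. -/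
def Delta2 (I : ℝ → ℝ) : Prop :=
  ∃ C : ℝ, 0 < C ∧ ∀ t ∈ Set.Ioo (0:ℝ) (1/2), I (2 * t) ≤ C * I t

/-- A rearrangement-invariant Banach function norm on `M₊(0,1)`. -/
def IsRiNorm (ρ : (ℝ → ℝ≥0∞) → ℝ≥0∞) : Prop :=
  (∀ f : ℝ → ℝ≥0∞, Measurable f →
      (ρ f = 0 ↔ f =ᵐ[volume.restrict (Set.Ioo (0:ℝ) 1)] 0)) ∧
  (∀ f : ℝ → ℝ≥0∞, Measurable f → ∀ a : ℝ, 0 ≤ a →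
      ρ (fun t => ENNReal.ofReal a * f t) = ENNReal.ofReal a * ρ f) ∧
  (∀ f g : ℝ → ℝ≥0∞, Measurable f → Measurable g →
      ρ (fun t => f t + g t) ≤ ρ f + ρ g) ∧
  (∀ f g : ℝ → ℝ≥0∞, Measurable f → Measurable g →
      (∀ᵐ t ∂(volume.restrict (Set.Ioo (0:ℝ) 1)), f t ≤ g t) → ρ f ≤ ρ g) ∧
  (∀ (fn : ℕ → ℝ → ℝ≥0∞) (f : ℝ → ℝ≥0∞), (∀ n, Measurable (fn n)) → Measurable f →
      (∀ᵐ t ∂(volume.restrict (Set.Ioo (0:ℝ) 1)), Monotone (fun n => fn n t)) →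
      (∀ᵐ t ∂(volume.restrict (Set.Ioo (0:ℝ) 1)), (⨆ n, fn n t) = f t) →
      (⨆ n, ρ (fn n)) = ρ f) ∧
  (ρ (fun _ => 1) < ⊤) ∧
  (∃ c : ℝ, 0 < c ∧ ∀ f : ℝ → ℝ≥0∞, Measurable f →
      ∫⁻ t in Set.Ioo (0:ℝ) 1, f t ≤ ENNReal.ofReal c * ρ f) ∧
  (∀ f : ℝ → ℝ≥0∞, Measurable f → ρ f = ρ (rearr f))

/-- The associate norm `ρ'`. -/
def assoc (ρ : (ℝ → ℝ≥0∞) → ℝ≥0∞) (f : ℝ → ℝ≥0∞) : ℝ≥0∞ :=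
  ⨆ (g : ℝ → ℝ≥0∞) (_ : Measurable g ∧ ρ g ≤ 1),
    ∫⁻ t in Set.Ioo (0:ℝ) 1, f t * g t

/-- The optimal target norm `‖f‖_{Y_X}` of the r.i. norm `ρ = ‖·‖_X` under `H_I`. -/
def optTargetNorm (I : ℝ → ℝ) (ρ : (ℝ → ℝ≥0∞) → ℝ≥0∞) (f : ℝ → ℝ≥0∞) : ℝ≥0∞ :=
  ⨆ (g : ℝ → ℝ≥0∞) (_ : Measurable g ∧ assoc ρ (RI I (rearr g)) ≤ 1),
    ∫⁻ t in Set.Ioo (0:ℝ) 1, rearr f t * rearr g t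

/-- The optimal domain norm `‖f‖_{X_Y} = sup_{h ∼ f} ‖H_I h‖_Y`. -/
def optDomainNorm (I : ℝ → ℝ) (ρY : (ℝ → ℝ≥0∞) → ℝ≥0∞) (f : ℝ → ℝ≥0∞) : ℝ≥0∞ :=
  ⨆ (h : ℝ → ℝ≥0∞)
    (_ : Measurable h ∧ ∀ t ∈ Set.Ioo (0:ℝ) 1, rearr h t = rearr f t),
      ρY (HI I h)

/-- `H_I : X → Y` boundedly. -/
def HIBounded (I : ℝ → ℝ) (ρX ρY : (ℝ → ℝ≥0∞) → ℝ≥0∞) : Prop :=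
  ∃ C : ℝ, 0 < C ∧ ∀ f : ℝ → ℝ≥0∞, Measurable f →
    ρY (HI I f) ≤ ENNReal.ofReal C * ρX f

/-- `X` is the optimal domain space for `Y` under `H_I`. -/
def IsOptimalDomain (I : ℝ → ℝ) (ρX ρY : (ℝ → ℝ≥0∞) → ℝ≥0∞) : Prop :=
  HIBounded I ρX ρY ∧
  ∀ ρZ : (ℝ → ℝ≥0∞) → ℝ≥0∞, IsRiNorm ρZ → HIBounded I ρZ ρY →
    ∃ C : ℝ, 0 < C ∧ ∀ f : ℝ → ℝ≥0∞, Measurable f →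
      ρX f ≤ ENNReal.ofReal C * ρZ f

/-- `Y` is the optimal target space for `X` under `H_I`. -/
def IsOptimalTarget (I : ℝ → ℝ) (ρX ρY : (ℝ → ℝ≥0∞) → ℝ≥0∞) : Prop :=
  HIBounded I ρX ρY ∧
  ∀ ρZ : (ℝ → ℝ≥0∞) → ℝ≥0∞, IsRiNorm ρZ → HIBounded I ρX ρZ →
    ∃ C : ℝ, 0 < C ∧ ∀ f : ℝ → ℝ≥0∞, Measurable f →
      ρZ f ≤ ENNReal.ofReal C * ρY f

lemma rearr_anti (f : ℝ → ℝ≥0∞) : Antitone (rearr f) := fun a b hab =>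
  sInf_le_sInf (fun _ hl => le_trans hl (ENNReal.ofReal_le_ofReal hab))

lemma rearr_le_dstar (f : ℝ → ℝ≥0∞) {s : ℝ} (hs : 0 < s) : rearr f s ≤ dstar f s := by
  have hsne : ENNReal.ofReal s ≠ 0 := (ENNReal.ofReal_pos.mpr hs).ne'
  have h1 : ENNReal.ofReal s * rearr f s ≤ ∫⁻ u in Set.Ioo (0:ℝ) s, rearr f u := by
    have h2 : ∫⁻ u in Set.Ioo (0:ℝ) s, rearr f s ≤ ∫⁻ u in Set.Ioo (0:ℝ) s, rearr f u := by
      refine lintegral_mono_ae ?_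
      filter_upwards [ae_restrict_mem measurableSet_Ioo] with u hu
      exact rearr_anti f (le_of_lt hu.2)
    simpa [setLIntegral_const, Real.volume_Ioo, mul_comm] using h2
  calc rearr f s = (ENNReal.ofReal s)⁻¹ * (ENNReal.ofReal s * rearr f s) := by
        rw [← mul_assoc, ENNReal.inv_mul_cancel hsne ENNReal.ofReal_ne_top, one_mul]
    _ ≤ dstar f s := mul_le_mul_right h1 _

lemma key_forward (I : ℝ → ℝ)
    (hmaps : ∀ t ∈ Set.Ioo (0:ℝ) 1, I t ∈ Set.Ioo (0:ℝ) 1)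
    {C : ℝ} (hC : 0 < C)
    (hAvg : ∀ t ∈ Set.Ioo (0:ℝ) 1,
      ∫⁻ s in Set.Ioo (0:ℝ) t, ENNReal.ofReal (1 / I s) ≤ ENNReal.ofReal (C * (t / I t)))
    (f : ℝ → ℝ≥0∞) {t : ℝ} (ht : t ∈ Set.Ioo (0:ℝ) 1) :
    (⨆ s ∈ Set.Ioc (0:ℝ) t, ENNReal.ofReal (I s) * dstar f s) ≤
      ENNReal.ofReal C * ⨆ s ∈ Set.Ioc (0:ℝ) t, ENNReal.ofReal (I s) * rearr f s := by
  set M := ⨆ s ∈ Set.Ioc (0:ℝ) t, ENNReal.ofReal (I s) * rearr f s with hM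
  by_cases hMtop : M = ⊤
  · rw [hMtop, ENNReal.mul_top (ENNReal.ofReal_pos.mpr hC).ne']
    exact le_top
  apply iSup₂_le
  intro s hs
  have hs01 : s ∈ Set.Ioo (0:ℝ) 1 := ⟨hs.1, lt_of_le_of_lt hs.2 ht.2⟩
  have hIs := hmaps s hs01
  have hane : ENNReal.ofReal (I s) ≠ 0 := (ENNReal.ofReal_pos.mpr hIs.1).ne'
  have hbne : ENNReal.ofReal s ≠ 0 := (ENNReal.ofReal_pos.mpr hs01.1).ne'
  -- pointwise bound
  have hpt : ∀ u ∈ Set.Ioo (0:ℝ) s, rearr f u ≤ M * ENNReal.ofReal (1 / I u) := by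
    intro u hu
    have hu01 : u ∈ Set.Ioo (0:ℝ) 1 := ⟨hu.1, hu.2.trans hs01.2⟩
    have hIu := hmaps u hu01
    have huM : ENNReal.ofReal (I u) * rearr f u ≤ M :=
      le_iSup₂ (f := fun v (_ : v ∈ Set.Ioc (0:ℝ) t) => ENNReal.ofReal (I v) * rearr f v)
        u ⟨hu.1, hu.2.le.trans hs.2⟩
    have hune : ENNReal.ofReal (I u) ≠ 0 := (ENNReal.ofReal_pos.mpr hIu.1).ne'
    calc rearr f u
        = (ENNReal.ofReal (I u))⁻¹ * (ENNReal.ofReal (I u) * rearr f u) := by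
          rw [← mul_assoc, ENNReal.inv_mul_cancel hune ENNReal.ofReal_ne_top, one_mul]
      _ ≤ (ENNReal.ofReal (I u))⁻¹ * M := mul_le_mul_right huM _
      _ = M * ENNReal.ofReal (1 / I u) := by
          rw [one_div, ENNReal.ofReal_inv_of_pos hIu.1, mul_comm]
  have hint : (∫⁻ u in Set.Ioo (0:ℝ) s, rearr f u) ≤ M * ENNReal.ofReal (C * (s / I s)) := by
    calc (∫⁻ u in Set.Ioo (0:ℝ) s, rearr f u)
        ≤ ∫⁻ u in Set.Ioo (0:ℝ) s, M * ENNReal.ofReal (1 / I u) := by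
          refine lintegral_mono_ae ?_
          filter_upwards [ae_restrict_mem measurableSet_Ioo] with u hu
          exact hpt u hu
      _ = M * ∫⁻ u in Set.Ioo (0:ℝ) s, ENNReal.ofReal (1 / I u) :=
          lintegral_const_mul' _ _ hMtop
      _ ≤ M * ENNReal.ofReal (C * (s / I s)) := mul_le_mul_right (hAvg s hs01) _
  have hofr : ENNReal.ofReal (C * (s / I s)) =
      ENNReal.ofReal C * (ENNReal.ofReal s * (ENNReal.ofReal (I s))⁻¹) := by
    rw [div_eq_mul_inv, ENNReal.ofReal_mul hC.le, ENNReal.ofReal_mul hs01.1.le,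
      ENNReal.ofReal_inv_of_pos hIs.1]
  calc ENNReal.ofReal (I s) * dstar f s
      ≤ ENNReal.ofReal (I s) * ((ENNReal.ofReal s)⁻¹ *
          (M * (ENNReal.ofReal C * (ENNReal.ofReal s * (ENNReal.ofReal (I s))⁻¹)))) := by
        refine mul_le_mul_right (mul_le_mul_right ?_ _) _
        rw [← hofr]; exact hint
    _ = (ENNReal.ofReal (I s) * (ENNReal.ofReal (I s))⁻¹) *
          ((ENNReal.ofReal s)⁻¹ * ENNReal.ofReal s) * (ENNReal.ofReal C * M) := by ring
    _ = ENNReal.ofReal C * M := by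
        rw [ENNReal.mul_inv_cancel hane ENNReal.ofReal_ne_top,
          ENNReal.inv_mul_cancel hbne ENNReal.ofReal_ne_top, one_mul, one_mul]

lemma key_reverse (I : ℝ → ℝ) (hmono : MonotoneOn I (Set.Ioo 0 1))
    (hmaps : ∀ t ∈ Set.Ioo (0:ℝ) 1, I t ∈ Set.Ioo (0:ℝ) 1)
    {C : ℝ} (hC : 0 < C)
    (hsup : ∀ f : ℝ → ℝ≥0∞, Measurable f → ∀ t ∈ Set.Ioo (0:ℝ) 1,
      (⨆ s ∈ Set.Ioc (0:ℝ) t, ENNReal.ofReal (I s) * dstar f s) ≤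
        ENNReal.ofReal C * ⨆ s ∈ Set.Ioc (0:ℝ) t, ENNReal.ofReal (I s) * rearr f s) :
    AvgProp I := by
  set g := (Set.Ioo (0:ℝ) 1).indicator (fun s => ENNReal.ofReal (1 / I s)) with hg
  have hgmem : ∀ u ∈ Set.Ioo (0:ℝ) 1, g u = ENNReal.ofReal (1 / I u) := fun u hu =>
    Set.indicator_of_mem hu _
  -- upper bound on rearr g
  have hg_up : ∀ s ∈ Set.Ioo (0:ℝ) 1, rearr g s ≤ ENNReal.ofReal (1 / I s) := by
    intro s hs
    refine sInf_le ?_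
    show volume {u ∈ Set.Ioo (0:ℝ) 1 | ENNReal.ofReal (1 / I s) < g u} ≤ ENNReal.ofReal s
    have hsubset : {u ∈ Set.Ioo (0:ℝ) 1 | ENNReal.ofReal (1 / I s) < g u} ⊆
        Set.Ioo (0:ℝ) s := by
      rintro u ⟨hu01, hlt⟩
      refine ⟨hu01.1, ?_⟩
      by_contra hle; push_neg at hle
      have h1 : (1:ℝ) / I u ≤ 1 / I s :=
        one_div_le_one_div_of_le (hmaps s hs).1 (hmono hs hu01 hle)
      rw [hgmem u hu01] at hlt
      exact hlt.not_ge (ENNReal.ofReal_le_ofReal h1)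
    calc volume {u ∈ Set.Ioo (0:ℝ) 1 | ENNReal.ofReal (1 / I s) < g u}
        ≤ volume (Set.Ioo (0:ℝ) s) := measure_mono hsubset
      _ = ENNReal.ofReal s := by rw [Real.volume_Ioo, sub_zero]
  -- lower bound on rearr g
  have hg_lo : ∀ s s' : ℝ, 0 ≤ s → s < s' → s' < 1 →
      ENNReal.ofReal (1 / I s') ≤ rearr g s := by
    intro s s' hs0 hss' hs'1
    have hs'mem : s' ∈ Set.Ioo (0:ℝ) 1 := ⟨lt_of_le_of_lt hs0 hss', hs'1⟩
    refine le_sInf fun l hl => ?_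
    by_contra hlt; push_neg at hlt
    have hsub : Set.Ioo (0:ℝ) s' ⊆ {u ∈ Set.Ioo (0:ℝ) 1 | l < g u} := by
      intro u hu
      have hu01 : u ∈ Set.Ioo (0:ℝ) 1 := ⟨hu.1, hu.2.trans hs'1⟩
      refine ⟨hu01, ?_⟩
      have h1 : (1:ℝ) / I s' ≤ 1 / I u :=
        one_div_le_one_div_of_le (hmaps u hu01).1 (hmono hu01 hs'mem hu.2.le)
      rw [hgmem u hu01]
      exact lt_of_lt_of_le hlt (ENNReal.ofReal_le_ofReal h1)
    have hvol : ENNReal.ofReal s' ≤ ENNReal.ofReal s := by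
      calc ENNReal.ofReal s' = volume (Set.Ioo (0:ℝ) s') := by rw [Real.volume_Ioo, sub_zero]
        _ ≤ volume {u ∈ Set.Ioo (0:ℝ) 1 | l < g u} := measure_mono hsub
        _ ≤ ENNReal.ofReal s := hl
    exact hss'.not_ge ((ENNReal.ofReal_le_ofReal_iff hs0).mp hvol)
  -- measurability of g
  have hgmeas : Measurable g := by
    apply measurable_of_Ioi
    intro c
    have hpre : g ⁻¹' Set.Ioi c = {u ∈ Set.Ioo (0:ℝ) 1 | c < ENNReal.ofReal (1 / I u)} := by
      ext u
      simp only [Set.mem_preimage, Set.mem_Ioi, Set.mem_sep_iff]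
      by_cases hu : u ∈ Set.Ioo (0:ℝ) 1
      · rw [hgmem u hu]; exact ⟨fun h => ⟨hu, h⟩, fun h => h.2⟩
      · rw [hg, Set.indicator_of_notMem hu]
        exact ⟨fun h => absurd h (by simp), fun h => absurd h.1 hu⟩
    rw [hpre]
    have hoc : OrdConnected {u ∈ Set.Ioo (0:ℝ) 1 | c < ENNReal.ofReal (1 / I u)} := by
      constructor
      rintro x ⟨hx, _⟩ y ⟨hy, hcy⟩ z hz
      have hz01 : z ∈ Set.Ioo (0:ℝ) 1 := ⟨lt_of_lt_of_le hx.1 hz.1, lt_of_le_of_lt hz.2 hy.2⟩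
      exact ⟨hz01, lt_of_lt_of_le hcy (ENNReal.ofReal_le_ofReal
        (one_div_le_one_div_of_le (hmaps z hz01).1 (hmono hz01 hy hz.2)))⟩
    exact hoc.measurableSet
  refine ⟨C, hC, fun t ht => ?_⟩
  have htne : ENNReal.ofReal t ≠ 0 := (ENNReal.ofReal_pos.mpr ht.1).ne'
  have hIt := hmaps t ht
  have hItne : ENNReal.ofReal (I t) ≠ 0 := (ENNReal.ofReal_pos.mpr hIt.1).ne'
  -- countable exceptional set
  have hcnt : Set.Countable {s ∈ Set.Ioo (0:ℝ) t | rearr g s < ENNReal.ofReal (1 / I s)} := by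
    have hsub : {s ∈ Set.Ioo (0:ℝ) t | rearr g s < ENNReal.ofReal (1 / I s)} ⊆
        ⋃ q : ℚ, {s ∈ Set.Ioo (0:ℝ) t | rearr g s < ENNReal.ofReal (q:ℝ) ∧
          ENNReal.ofReal (q:ℝ) < ENNReal.ofReal (1 / I s)} := by
      rintro s ⟨hs, hlt⟩
      have hs01 : s ∈ Set.Ioo (0:ℝ) 1 := ⟨hs.1, hs.2.trans ht.2⟩
      have hne : rearr g s ≠ ⊤ := (hlt.trans ENNReal.ofReal_lt_top).ne
      have h2 : (rearr g s).toReal < 1 / I s := (ENNReal.lt_ofReal_iff_toReal_lt hne).mp hlt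
      obtain ⟨q, hq1, hq2⟩ := exists_rat_btwn h2
      refine Set.mem_iUnion.mpr ⟨q, hs, (ENNReal.lt_ofReal_iff_toReal_lt hne).mpr hq1, ?_⟩
      exact (ENNReal.ofReal_lt_ofReal_iff (one_div_pos.mpr (hmaps s hs01).1)).mpr hq2
    refine Set.Countable.mono hsub (Set.countable_iUnion fun q => Set.Subsingleton.countable ?_)
    have hkey : ∀ a b : ℝ, a ∈ {s ∈ Set.Ioo (0:ℝ) t | rearr g s < ENNReal.ofReal (q:ℝ) ∧
          ENNReal.ofReal (q:ℝ) < ENNReal.ofReal (1 / I s)} →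
        b ∈ {s ∈ Set.Ioo (0:ℝ) t | rearr g s < ENNReal.ofReal (q:ℝ) ∧
          ENNReal.ofReal (q:ℝ) < ENNReal.ofReal (1 / I s)} → a < b → False := by
      rintro a b ⟨ha, ha1, _⟩ ⟨hb, _, hb2⟩ hab
      have := hg_lo a b ha.1.le hab (hb.2.trans ht.2)
      exact (lt_irrefl _ (hb2.trans_le (this.trans ha1.le)))
    intro a ha b hb
    by_contra hne
    rcases lt_or_gt_of_ne hne with h | h
    · exact hkey a b ha hb h
    · exact hkey b a hb ha h
  have hA0 : volume {s ∈ Set.Ioo (0:ℝ) t | rearr g s < ENNReal.ofReal (1 / I s)} = 0 :=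
    hcnt.measure_zero _
  have hae : ∀ᵐ s ∂(volume.restrict (Set.Ioo (0:ℝ) t)),
      ENNReal.ofReal (1 / I s) ≤ rearr g s := by
    rw [ae_restrict_iff' measurableSet_Ioo, ae_iff]
    refine measure_mono_null (fun s hs => ?_) hA0
    simp only [Set.mem_setOf_eq] at hs
    push_neg at hs
    exact ⟨hs.1, hs.2⟩
  have h1 : (∫⁻ s in Set.Ioo (0:ℝ) t, ENNReal.ofReal (1 / I s)) ≤
      ∫⁻ s in Set.Ioo (0:ℝ) t, rearr g s := lintegral_mono_ae hae
  have h2 : ENNReal.ofReal (I t) * dstar g t ≤ ENNReal.ofReal C := by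
    calc ENNReal.ofReal (I t) * dstar g t
        ≤ ⨆ s ∈ Set.Ioc (0:ℝ) t, ENNReal.ofReal (I s) * dstar g s :=
          le_iSup₂ (f := fun s (_ : s ∈ Set.Ioc (0:ℝ) t) => ENNReal.ofReal (I s) * dstar g s)
            t ⟨ht.1, le_refl t⟩
      _ ≤ ENNReal.ofReal C * ⨆ s ∈ Set.Ioc (0:ℝ) t, ENNReal.ofReal (I s) * rearr g s :=
          hsup g hgmeas t ht
      _ ≤ ENNReal.ofReal C * 1 := by
          refine mul_le_mul_right (iSup₂_le fun s hs => ?_) _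
          have hs01 : s ∈ Set.Ioo (0:ℝ) 1 := ⟨hs.1, lt_of_le_of_lt hs.2 ht.2⟩
          calc ENNReal.ofReal (I s) * rearr g s
              ≤ ENNReal.ofReal (I s) * ENNReal.ofReal (1 / I s) :=
                mul_le_mul_right (hg_up s hs01) _
            _ = ENNReal.ofReal (I s * (1 / I s)) :=
                (ENNReal.ofReal_mul (hmaps s hs01).1.le).symm
            _ = 1 := by
                rw [mul_one_div, div_self (hmaps s hs01).1.ne', ENNReal.ofReal_one]
      _ = ENNReal.ofReal C := mul_one _
  have h3 : ENNReal.ofReal t * (ENNReal.ofReal (I t))⁻¹ *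
      (ENNReal.ofReal (I t) * dstar g t) = ∫⁻ s in Set.Ioo (0:ℝ) t, rearr g s := by
    rw [dstar]
    calc ENNReal.ofReal t * (ENNReal.ofReal (I t))⁻¹ *
        (ENNReal.ofReal (I t) * ((ENNReal.ofReal t)⁻¹ * ∫⁻ s in Set.Ioo (0:ℝ) t, rearr g s))
        = (ENNReal.ofReal (I t) * (ENNReal.ofReal (I t))⁻¹) *
          ((ENNReal.ofReal t * (ENNReal.ofReal t)⁻¹) *
            ∫⁻ s in Set.Ioo (0:ℝ) t, rearr g s) := by ring
      _ = ∫⁻ s in Set.Ioo (0:ℝ) t, rearr g s := by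
          rw [ENNReal.mul_inv_cancel hItne ENNReal.ofReal_ne_top,
            ENNReal.mul_inv_cancel htne ENNReal.ofReal_ne_top, one_mul, one_mul]
  calc (∫⁻ s in Set.Ioo (0:ℝ) t, ENNReal.ofReal (1 / I s))
      ≤ ∫⁻ s in Set.Ioo (0:ℝ) t, rearr g s := h1
    _ = ENNReal.ofReal t * (ENNReal.ofReal (I t))⁻¹ *
        (ENNReal.ofReal (I t) * dstar g t) := h3.symm
    _ ≤ ENNReal.ofReal t * (ENNReal.ofReal (I t))⁻¹ * ENNReal.ofReal C :=
        mul_le_mul_right h2 _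
    _ = ENNReal.ofReal (C * (t / I t)) := by
        rw [← ENNReal.ofReal_inv_of_pos hIt.1, ← ENNReal.ofReal_mul ht.1.le,
          ← ENNReal.ofReal_mul (mul_nonneg ht.1.le (inv_nonneg.mpr hIt.1.le))]
        congr 1
        rw [div_eq_mul_inv]; ring

/-- Proposition 3.5 / `lem:NIApproxMNI`.  For nondecreasing
`I : (0,1) → (0,1)`, the average property holds iff
`sup_{0<s≤t} I(s) f^{**}(s) ≲ sup_{0<s≤t} I(s) f^*(s)` uniformly; the converse inequality
always holds, and under the average property `‖·‖_{m_I}` and `‖·‖_{M_I}` are equivalent. -/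
theorem statement6 (I : ℝ → ℝ) (hmono : MonotoneOn I (Set.Ioo 0 1))
    (hmaps : ∀ t ∈ Set.Ioo (0:ℝ) 1, I t ∈ Set.Ioo (0:ℝ) 1) :
    (AvgProp I ↔
      ∃ C : ℝ, 0 < C ∧ ∀ f : ℝ → ℝ≥0∞, Measurable f → ∀ t ∈ Set.Ioo (0:ℝ) 1,
        (⨆ s ∈ Set.Ioc (0:ℝ) t, ENNReal.ofReal (I s) * dstar f s) ≤
          ENNReal.ofReal C * ⨆ s ∈ Set.Ioc (0:ℝ) t, ENNReal.ofReal (I s) * rearr f s) ∧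
    (∀ f : ℝ → ℝ≥0∞, Measurable f → ∀ t ∈ Set.Ioo (0:ℝ) 1,
      (⨆ s ∈ Set.Ioc (0:ℝ) t, ENNReal.ofReal (I s) * rearr f s) ≤
        ⨆ s ∈ Set.Ioc (0:ℝ) t, ENNReal.ofReal (I s) * dstar f s) ∧
    (AvgProp I →
      ∃ C : ℝ, 0 < C ∧ ∀ f : ℝ → ℝ≥0∞, Measurable f →
        mNorm I f ≤ (⨆ t ∈ Set.Ioo (0:ℝ) 1, ENNReal.ofReal (I t) * dstar f t) ∧
        (⨆ t ∈ Set.Ioo (0:ℝ) 1, ENNReal.ofReal (I t) * dstar f t) ≤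
          ENNReal.ofReal C * mNorm I f) := by
  refine ⟨⟨fun hA => ?_, fun hrev => ?_⟩, fun f _ t ht => ?_, fun hA => ?_⟩
  · obtain ⟨C, hC, hAvg⟩ := hA
    exact ⟨C, hC, fun f _ t ht => key_forward I hmaps hC hAvg f ht⟩
  · obtain ⟨C, hC, hsup⟩ := hrev
    exact key_reverse I hmono hmaps hC hsup
  · exact iSup₂_mono fun s hs => mul_le_mul_right (rearr_le_dstar f hs.1) _
  · obtain ⟨C, hC, hAvg⟩ := hA
    refine ⟨C, hC, fun f _ => ⟨?_, ?_⟩⟩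
    · simp only [mNorm]
      exact iSup₂_mono fun t ht => mul_le_mul_right (rearr_le_dstar f ht.1) _
    · refine iSup₂_le fun t ht => ?_
      calc ENNReal.ofReal (I t) * dstar f t
          ≤ ⨆ s ∈ Set.Ioc (0:ℝ) t, ENNReal.ofReal (I s) * dstar f s :=
            le_iSup₂ (f := fun s (_ : s ∈ Set.Ioc (0:ℝ) t) =>
              ENNReal.ofReal (I s) * dstar f s) t ⟨ht.1, le_refl t⟩
        _ ≤ ENNReal.ofReal C * ⨆ s ∈ Set.Ioc (0:ℝ) t, ENNReal.ofReal (I s) * rearr f s :=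
            key_forward I hmaps hC hAvg f ht
        _ ≤ ENNReal.ofReal C * mNorm I f := by
            refine mul_le_mul_right (iSup₂_le fun s hs => ?_) _
            exact le_iSup₂ (f := fun u (_ : u ∈ Set.Ioo (0:ℝ) 1) =>
              ENNReal.ofReal (I u) * rearr f u) s ⟨hs.1, lt_of_le_of_lt hs.2 ht.2⟩
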